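/- Let (X,d) be a uniformly discrete bounded geometry metric space and {φ_i : X → Y_i}_{i=1}^n a strongly embeddable family of maps. If the preimages {φ_i⁻¹(w) : w ∈ Y_i, i = 1,…,n} form an equi-strongly embeddable family of metric spaces, then X is strongly embeddable. -/
import Mathlib


open Metric Filter
noncomputable section

/-- Uniformly discrete metric space. -/
def UniformlyDiscrete (X : Type*) [MetricSpace X] : Prop :=
  ∃ c > (0:ℝ), ∀ x y : X, x ≠ y → c ≤ dist x y

/-- Bounded geometry: uniformly finite balls. -/
def BoundedGeometry (X : Type*) [MetricSpace X] : Prop :=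
  ∀ r : ℝ, ∃ N : ℕ, ∀ x : X,
    (Metric.closedBall x r).Finite ∧ (Metric.closedBall x r).ncard ≤ N

/-- `X` is strongly embeddable: for all `R, ε > 0` there is a unit-norm map
`β : X → ℓ²(X)` with `‖β x - β y‖ ≤ ε` when `dist x y ≤ R`, and
`lim_{S→∞} sup_x Σ_{w ∉ B_S(x)} |β x w|² = 0`. -/
def StronglyEmbeddable (X : Type*) [MetricSpace X] : Prop :=
  ∀ R > (0:ℝ), ∀ ε > (0:ℝ), ∃ β : X → lp (fun _ : X => ℝ) 2,
    (∀ x : X, ‖β x‖ = 1) ∧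
    (∀ x y : X, dist x y ≤ R → ‖β x - β y‖ ≤ ε) ∧
    (∀ δ > (0:ℝ), ∃ S : ℝ, ∀ x : X,
      (∑' w : {w : X // S < dist x w}, (β x w.1) ^ 2) ≤ δ)

/-- A strongly embeddable family of maps `φ i : X → Y i`. -/
def SEFamily {X : Type*} [MetricSpace X] {n : ℕ} {Y : Fin n → Type*}
    (φ : ∀ i, X → Y i) : Prop :=
  ∀ R > (0:ℝ), ∀ ε > (0:ℝ), ∃ ξ : X → lp (fun _ : (Σ i, Y i) => ℝ) 2,
    (∀ x : X, ‖ξ x‖ = 1) ∧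
    (∀ x y : X, dist x y ≤ R → ‖ξ x - ξ y‖ ≤ ε) ∧
    (∀ δ > (0:ℝ), ∃ S : ℝ, ∀ x : X,
      (∑' w : {w : Σ i, Y i // ¬ ∃ z : X, dist x z < S ∧ φ w.1 z = w.2},
        (ξ x w.1) ^ 2) ≤ δ)

/-- A family of subsets of `X` is equi-strongly embeddable. -/
def EquiStronglyEmbeddable {X : Type*} [MetricSpace X] {I : Type*} (A : I → Set X) : Prop :=
  ∀ R > (0:ℝ), ∀ ε > (0:ℝ), ∃ ξ : ∀ j, A j → lp (fun _ : A j => ℝ) 2,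
    (∀ (j : I) (x : A j), ‖ξ j x‖ = 1) ∧
    (∀ (j : I) (x y : A j), dist (x : X) (y : X) ≤ R → ‖ξ j x - ξ j y‖ ≤ ε) ∧
    (∀ δ > (0:ℝ), ∃ S : ℝ, ∀ (j : I) (x : A j),
      (∑' w : {w : A j // S < dist (x : X) (w : X)}, (ξ j x w.1) ^ 2) ≤ δ)


section helpers
variable {ι : Type*}

lemma lp2_summable_sq (f : lp (fun _ : ι => ℝ) 2) : Summable (fun i => (f i)^2) := by
  have h := Memℓp.summable (p := 2) (by norm_num) (lp.memℓp f)
  simpa [Real.rpow_two, sq_abs] using h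

lemma lp2_norm_sq (f : lp (fun _ : ι => ℝ) 2) : ‖f‖^2 = ∑' i, (f i)^2 := by
  have h := lp.norm_rpow_eq_tsum (p := 2) (by norm_num) f
  simpa [Real.rpow_two, sq_abs] using h

lemma lp2_apply_sq_le (f : lp (fun _ : ι => ℝ) 2) (i : ι) : (f i)^2 ≤ ‖f‖^2 := by
  have h := lp.norm_apply_le_norm (E := fun _ : ι => ℝ) (p := 2) (by norm_num) f i
  have h0 : (0:ℝ) ≤ ‖f i‖ := norm_nonneg _
  calc (f i)^2 = ‖f i‖^2 := by rw [Real.norm_eq_abs, sq_abs]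
  _ ≤ ‖f‖^2 := by nlinarith [norm_nonneg f]

lemma tsum_subtype_mono {f : ι → ℝ} (h0 : ∀ i, 0 ≤ f i) (hf : Summable f)
    {s t : Set ι} (hst : s ⊆ t) : ∑' i : s, f i ≤ ∑' i : t, f i := by
  rw [tsum_subtype, tsum_subtype]
  exact Summable.tsum_le_tsum (fun i => Set.indicator_le_indicator_of_subset hst h0 i)
    (hf.indicator s) (hf.indicator t)

lemma sq_sqrt_sub_sqrt_le {a b : ℝ} (ha : 0 ≤ a) (hb : 0 ≤ b) :
    (Real.sqrt a - Real.sqrt b)^2 ≤ |a - b| := by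
  rcases le_total b a with h | h
  · rw [abs_of_nonneg (by linarith)]
    nlinarith [Real.sq_sqrt ha, Real.sq_sqrt hb, Real.sqrt_nonneg a, Real.sqrt_nonneg b,
      Real.sqrt_le_sqrt h]
  · rw [abs_of_nonpos (by linarith)]
    nlinarith [Real.sq_sqrt ha, Real.sq_sqrt hb, Real.sqrt_nonneg a, Real.sqrt_nonneg b,
      Real.sqrt_le_sqrt h]

lemma summable_abs_mul {f g : ι → ℝ} (hf : Summable fun i => f i ^ 2)
    (hg : Summable fun i => g i ^ 2) : Summable fun i => |f i| * |g i| := by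
  apply Summable.of_nonneg_of_le (fun i => by positivity)
    (fun i => ?_) (by simpa using (hf.add hg).mul_left (1/2 : ℝ))
  have := sq_nonneg (|f i| - |g i|)
  have h1 : |f i|^2 = f i^2 := sq_abs _
  have h2 : |g i|^2 = g i^2 := sq_abs _
  nlinarith

lemma tsum_abs_mul_le {f g : ι → ℝ} (hf : Summable fun i => f i ^ 2)
    (hg : Summable fun i => g i ^ 2) :
    ∑' i, |f i| * |g i| ≤ Real.sqrt (∑' i, f i ^ 2) * Real.sqrt (∑' i, g i ^ 2) := by
  set A := ∑' i, f i ^ 2 with hA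
  set B := ∑' i, g i ^ 2 with hB
  have hA0 : 0 ≤ A := tsum_nonneg fun i => sq_nonneg _
  have hB0 : 0 ≤ B := tsum_nonneg fun i => sq_nonneg _
  rcases eq_or_lt_of_le hA0 with hA0' | hA0'
  · have hf0 : ∀ i, f i = 0 := by
      intro i
      have h1 : f i ^2 ≤ A := Summable.le_tsum hf i fun j _ => sq_nonneg _
      nlinarith [sq_nonneg (f i)]
    simp only [hf0, abs_zero, zero_mul, tsum_zero]
    positivity
  rcases eq_or_lt_of_le hB0 with hB0' | hB0'
  · have hg0 : ∀ i, g i = 0 := by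
      intro i
      have h1 : g i ^2 ≤ B := Summable.le_tsum hg i fun j _ => sq_nonneg _
      nlinarith [sq_nonneg (g i)]
    simp only [hg0, abs_zero, mul_zero, tsum_zero]
    positivity
  set s := Real.sqrt A with hs
  set r := Real.sqrt B with hr
  have hs0 : 0 < s := Real.sqrt_pos.2 hA0'
  have hr0 : 0 < r := Real.sqrt_pos.2 hB0'
  have hsA : s^2 = A := Real.sq_sqrt hA0
  have hrB : r^2 = B := Real.sq_sqrt hB0
  have key : ∀ i, |f i| * |g i| ≤ (r^2 * f i^2 + s^2 * g i^2) / (2*s*r) := by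
    intro i
    rw [le_div_iff₀ (by positivity)]
    nlinarith [sq_nonneg (r * |f i| - s * |g i|), sq_abs (f i), sq_abs (g i),
      abs_nonneg (f i), abs_nonneg (g i)]
  calc ∑' i, |f i| * |g i| ≤ ∑' i, (r^2 * f i^2 + s^2 * g i^2) / (2*s*r) := by
        apply Summable.tsum_le_tsum key (summable_abs_mul hf hg)
        exact ((hf.mul_left _).add (hg.mul_left _)).div_const _
    _ = (r^2 * A + s^2 * B) / (2*s*r) := by
        rw [tsum_div_const, Summable.tsum_add (hf.mul_left _) (hg.mul_left _),
          tsum_mul_left, tsum_mul_left]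
    _ = s * r := by rw [← hsA, ← hrB]; field_simp; ring

end helpers

open scoped ENNReal
section moreHelpers
variable {ι : Type*}

lemma support_subset_of_zero {s : Set ι} {f : ι → ℝ} (h : ∀ i ∉ s, f i = 0) :
    Function.support f ⊆ s := fun i hi => by
  by_contra hns; exact hi (h i hns)

lemma summable_subtype_of_support {s : Set ι} {f : ι → ℝ} (h : ∀ i ∉ s, f i = 0) :
    Summable (fun w : s => f ↑w) ↔ Summable f := by
  have h1 := summable_subtype_iff_indicator (f := f) (s := s)
  rw [Set.indicator_eq_self.2 (support_subset_of_zero h)] at h1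
  exact h1

lemma tsum_subtype_of_support {s : Set ι} {f : ι → ℝ} (h : ∀ i ∉ s, f i = 0) :
    ∑' w : s, f ↑w = ∑' i, f i :=
  tsum_subtype_eq_of_support_subset (support_subset_of_zero h)

lemma summable_sq_sub {f g : ι → ℝ} (hf : Summable fun i => f i ^ 2)
    (hg : Summable fun i => g i ^ 2) : Summable fun i => (f i - g i) ^ 2 := by
  apply Summable.of_nonneg_of_le (fun i => sq_nonneg _) (fun i => ?_)
    ((hf.mul_left 2).add (hg.mul_left 2))
  nlinarith [sq_nonneg (f i + g i)]

lemma summable_sq_add {f g : ι → ℝ} (hf : Summable fun i => f i ^ 2)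
    (hg : Summable fun i => g i ^ 2) : Summable fun i => (f i + g i) ^ 2 := by
  apply Summable.of_nonneg_of_le (fun i => sq_nonneg _) (fun i => ?_)
    ((hf.mul_left 2).add (hg.mul_left 2))
  nlinarith [sq_nonneg (f i - g i)]

lemma summable_abs_sq_sub_sq {f g : ι → ℝ} (hf : Summable fun i => f i ^ 2)
    (hg : Summable fun i => g i ^ 2) : Summable fun i => |f i ^ 2 - g i ^ 2| := by
  apply Summable.of_nonneg_of_le (fun i => abs_nonneg _) (fun i => ?_) (hf.add hg)
  have := abs_sub_abs_le_abs_sub (f i ^2) (g i ^2)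
  rw [abs_sub_comm]
  calc |g i ^2 - f i ^2| ≤ |g i^2| + |f i^2| := abs_sub _ _
    _ = f i ^2 + g i ^2 := by
        rw [abs_of_nonneg (sq_nonneg (g i)), abs_of_nonneg (sq_nonneg (f i))]; ring

lemma tsum_abs_sq_sub_sq_le {f g : ι → ℝ} (hf : Summable fun i => f i ^ 2)
    (hg : Summable fun i => g i ^ 2) (hf1 : ∑' i, f i ^ 2 ≤ 1) (hg1 : ∑' i, g i ^ 2 ≤ 1) :
    ∑' i, |f i ^ 2 - g i ^ 2| ≤ 2 * Real.sqrt (∑' i, (f i - g i) ^ 2) := by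
  have hfg : Summable fun i => (f i - g i) ^ 2 := summable_sq_sub hf hg
  have hfg' : Summable fun i => (f i + g i) ^ 2 := summable_sq_add hf hg
  have h4 : ∑' i, (f i + g i) ^ 2 ≤ 4 := by
    calc ∑' i, (f i + g i)^2 ≤ ∑' i, (2 * f i^2 + 2 * g i^2) :=
          Summable.tsum_le_tsum (fun i => by nlinarith [sq_nonneg (f i - g i)]) hfg'
            ((hf.mul_left 2).add (hg.mul_left 2))
      _ = 2 * (∑' i, f i^2) + 2 * (∑' i, g i^2) := by
          rw [Summable.tsum_add (hf.mul_left 2) (hg.mul_left 2), tsum_mul_left, tsum_mul_left]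
      _ ≤ 4 := by linarith
  calc ∑' i, |f i ^ 2 - g i ^ 2| = ∑' i, |f i - g i| * |f i + g i| := by
        refine tsum_congr fun i => ?_
        rw [← abs_mul]; congr 1; ring
    _ ≤ Real.sqrt (∑' i, (f i - g i)^2) * Real.sqrt (∑' i, (f i + g i)^2) :=
        tsum_abs_mul_le hfg hfg'
    _ ≤ Real.sqrt (∑' i, (f i - g i)^2) * 2 := by
        refine mul_le_mul_of_nonneg_left ?_ (Real.sqrt_nonneg _)
        rw [show (2:ℝ) = Real.sqrt 4 by
          rw [show (4:ℝ) = 2^2 by norm_num, Real.sqrt_sq (by norm_num : (0:ℝ) ≤ 2)]]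
        exact Real.sqrt_le_sqrt h4
    _ = 2 * Real.sqrt (∑' i, (f i - g i)^2) := mul_comm _ _

end moreHelpers

section construction

attribute [local instance] Classical.propDecidable

namespace SEAux

variable {X : Type} [MetricSpace X] {n : ℕ} {Y : Fin n → Type}

/-- The preimage sets. -/
abbrev A (φ : ∀ i, X → Y i) (p : Σ i, Y i) : Set X := φ p.1 ⁻¹' {p.2}

variable (φ : ∀ i, X → Y i) (S : ℝ)
  (ξ : X → lp (fun _ : (Σ i, Y i) => ℝ) 2)
  (η : ∀ p : Σ i, Y i, A φ p → lp (fun _ : A φ p => ℝ) 2)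

def good (x : X) (p : Σ i, Y i) : Prop := ∃ z : X, dist x z < S ∧ φ p.1 z = p.2

def rep (x : X) (p : Σ i, Y i) (h : good φ S x p) : A φ p :=
  ⟨h.choose, h.choose_spec.2⟩

lemma dist_rep (x : X) (p : Σ i, Y i) (h : good φ S x p) :
    dist x (rep φ S x p h : X) < S := h.choose_spec.1

def v (x : X) (p : Σ i, Y i) : A φ p → ℝ :=
  fun w => if h : good φ S x p then η p (rep φ S x p h) w else 0

def u (x : X) (p : Σ i, Y i) : X → ℝ :=
  fun z => if hz : z ∈ A φ p then v φ S η x p ⟨z, hz⟩ else 0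

def F (x : X) (p : Σ i, Y i) (z : X) : ℝ := (ξ x p)^2 * (u φ S η x p z)^2

def tx (x : X) : ℝ := 1 - ∑' p : {p : Σ i, Y i | good φ S x p}, (ξ x ↑p)^2

def G (x z : X) : ℝ := (if z = x then tx φ S ξ x else 0) + ∑' p, F φ S ξ η x p z

def βf (x z : X) : ℝ := Real.sqrt (G φ S ξ η x z)

variable {φ S ξ η}

lemma u_zero_off {x : X} {p : Σ i, Y i} {z : X} (hz : z ∉ A φ p) : u φ S η x p z = 0 :=
  dif_neg hz

lemma u_coe (x : X) (p : Σ i, Y i) (w : A φ p) : u φ S η x p ↑w = v φ S η x p w := by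
  rw [u, dif_pos w.2]

lemma u_sq_zero_off {x : X} {p : Σ i, Y i} : ∀ z ∉ A φ p, (u φ S η x p z)^2 = 0 :=
  fun _ hz => by rw [u_zero_off hz]; ring

lemma v_eq {x : X} {p : Σ i, Y i} (h : good φ S x p) (w : A φ p) :
    v φ S η x p w = η p (rep φ S x p h) w := dif_pos h

lemma v_zero {x : X} {p : Σ i, Y i} (h : ¬ good φ S x p) (w : A φ p) :
    v φ S η x p w = 0 := dif_neg h

lemma u_sq_zero_of_not_good {x : X} {p : Σ i, Y i} (h : ¬ good φ S x p) (z : X) :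
    (u φ S η x p z)^2 = 0 := by
  by_cases hz : z ∈ A φ p
  · rw [u, dif_pos hz, v_zero h]; ring
  · exact u_sq_zero_off z hz

lemma summable_u_sq (x : X) (p : Σ i, Y i) : Summable fun z => (u φ S η x p z)^2 := by
  by_cases h : good φ S x p
  · rw [← summable_subtype_of_support (u_sq_zero_off (x := x) (p := p))]
    exact (lp2_summable_sq (η p (rep φ S x p h))).congr
      (fun w => by rw [u_coe, v_eq h])
  · exact summable_zero.congr fun z => (u_sq_zero_of_not_good h z).symm

lemma tsum_u_sq (hη1 : ∀ p (a : A φ p), ‖η p a‖ = 1) (x : X) (p : Σ i, Y i) :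
    ∑' z, (u φ S η x p z)^2 = if good φ S x p then 1 else 0 := by
  by_cases h : good φ S x p
  · rw [if_pos h, ← tsum_subtype_of_support (u_sq_zero_off (x := x) (p := p))]
    rw [tsum_congr (fun w : A φ p => by rw [u_coe, v_eq h])]
    rw [← lp2_norm_sq, hη1]; norm_num
  · rw [if_neg h, tsum_congr (u_sq_zero_of_not_good h), tsum_zero]

lemma u_sq_le_one (hη1 : ∀ p (a : A φ p), ‖η p a‖ = 1) (x : X) (p : Σ i, Y i) (z : X) :
    (u φ S η x p z)^2 ≤ 1 := by
  by_cases h : good φ S x p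
  · by_cases hz : z ∈ A φ p
    · rw [u, dif_pos hz, v_eq h]
      have := lp2_apply_sq_le (η p (rep φ S x p h)) ⟨z, hz⟩
      rwa [hη1, one_pow] at this
    · rw [u_sq_zero_off z hz]; norm_num
  · rw [u_sq_zero_of_not_good h]; norm_num

lemma F_nonneg (x : X) (p : Σ i, Y i) (z : X) : 0 ≤ F φ S ξ η x p z := by
  rw [F]; positivity

lemma summable_F_p (x : X) (p : Σ i, Y i) : Summable fun z => F φ S ξ η x p z :=
  (summable_u_sq x p).mul_left _

lemma tsum_F_p (hη1 : ∀ p (a : A φ p), ‖η p a‖ = 1) (x : X) (p : Σ i, Y i) :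
    ∑' z, F φ S ξ η x p z = (ξ x p)^2 * (if good φ S x p then 1 else 0) := by
  calc ∑' z, F φ S ξ η x p z = ∑' z, (ξ x p)^2 * (u φ S η x p z)^2 := rfl
    _ = (ξ x p)^2 * ∑' z, (u φ S η x p z)^2 := tsum_mul_left
    _ = (ξ x p)^2 * (if good φ S x p then 1 else 0) := by rw [tsum_u_sq hη1]

lemma summable_F_marg (hη1 : ∀ p (a : A φ p), ‖η p a‖ = 1) (x : X) :
    Summable fun p => ∑' z, F φ S ξ η x p z := by
  apply Summable.of_nonneg_of_le
    (fun p => tsum_nonneg (fun z => F_nonneg x p z)) (fun p => ?_) (lp2_summable_sq (ξ x))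
  rw [tsum_F_p hη1]
  by_cases h : good φ S x p <;> simp [h, sq_nonneg]

lemma summable_F_prod (hη1 : ∀ p (a : A φ p), ‖η p a‖ = 1) (x : X) :
    Summable fun q : (Σ i, Y i) × X => F φ S ξ η x q.1 q.2 :=
  (summable_prod_of_nonneg (fun q => F_nonneg x q.1 q.2)).2
    ⟨fun p => summable_F_p x p, summable_F_marg hη1 x⟩

lemma summable_F_z (hη1 : ∀ p (a : A φ p), ‖η p a‖ = 1) (x : X) (z : X) :
    Summable fun p => F φ S ξ η x p z := by
  apply Summable.of_nonneg_of_le (fun p => F_nonneg x p z) (fun p => ?_)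
    (lp2_summable_sq (ξ x))
  calc F φ S ξ η x p z ≤ (ξ x p)^2 * 1 :=
        mul_le_mul_of_nonneg_left (u_sq_le_one hη1 x p z) (sq_nonneg _)
    _ = (ξ x p)^2 := mul_one _

lemma tsum_good_subtype (x : X) :
    ∑' p, (if good φ S x p then (ξ x p)^2 else 0) = ∑' p : {p : Σ i, Y i | good φ S x p}, (ξ x ↑p)^2 := by
  rw [← tsum_subtype_of_support (s := {p : Σ i, Y i | good φ S x p})
    (f := fun p => if good φ S x p then (ξ x p)^2 else 0) (fun p hp => if_neg hp)]
  exact tsum_congr fun w => if_pos w.2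

lemma tsum_tsum_F (hη1 : ∀ p (a : A φ p), ‖η p a‖ = 1) (x : X) :
    ∑' z, ∑' p, F φ S ξ η x p z = ∑' p : {p : Σ i, Y i | good φ S x p}, (ξ x ↑p)^2 := by
  rw [Summable.tsum_comm (f := fun p z => F φ S ξ η x p z) (summable_F_prod hη1 x)]
  rw [tsum_congr (tsum_F_p hη1 x), ← tsum_good_subtype]
  exact tsum_congr fun p => by by_cases h : good φ S x p <;> simp [h]

lemma tsum_good_le_one (hξ1 : ∀ x, ‖ξ x‖ = 1) (x : X) :
    ∑' p : {p : Σ i, Y i | good φ S x p}, (ξ x ↑p)^2 ≤ 1 := by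
  have h := Summable.tsum_subtype_le (fun p => (ξ x p)^2) {p : Σ i, Y i | good φ S x p}
    (fun p => sq_nonneg _) (lp2_summable_sq (ξ x))
  rwa [← lp2_norm_sq, hξ1, one_pow] at h

lemma tx_nonneg (hξ1 : ∀ x, ‖ξ x‖ = 1) (x : X) : 0 ≤ tx φ S ξ x := by
  rw [tx]; linarith [tsum_good_le_one (φ := φ) (S := S) (ξ := ξ) hξ1 x]

lemma tx_eq_tail (hξ1 : ∀ x, ‖ξ x‖ = 1) (x : X) :
    tx φ S ξ x = ∑' p : {p : Σ i, Y i | ¬ good φ S x p}, (ξ x ↑p)^2 := by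
  have h := Summable.tsum_add_tsum_compl (s := {p : Σ i, Y i | good φ S x p})
    (f := fun p => (ξ x p)^2)
    ((lp2_summable_sq (ξ x)).subtype _) ((lp2_summable_sq (ξ x)).subtype _)
  rw [← lp2_norm_sq, hξ1, one_pow] at h
  rw [Set.compl_setOf] at h
  rw [tx]; linarith

lemma G_nonneg (hξ1 : ∀ x, ‖ξ x‖ = 1) (x z : X) : 0 ≤ G φ S ξ η x z := by
  rw [G]
  have h1 : 0 ≤ (if z = x then tx φ S ξ x else 0) := by
    by_cases h : z = x <;> simp [h, tx_nonneg hξ1]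
  have h2 : 0 ≤ ∑' p, F φ S ξ η x p z := tsum_nonneg fun p => F_nonneg x p z
  linarith

lemma summable_dxf (x : X) : Summable fun z : X => if z = x then tx φ S ξ x else 0 :=
  (hasSum_ite_eq x (tx φ S ξ x)).summable

lemma summable_sum_F (hη1 : ∀ p (a : A φ p), ‖η p a‖ = 1) (x : X) :
    Summable fun z => ∑' p, F φ S ξ η x p z := by
  have h := (summable_F_prod (S := S) (ξ := ξ) hη1 x).prod_symm
  exact ((summable_prod_of_nonneg (fun q => F_nonneg x q.2 q.1)).1 h).2

lemma summable_G (hξ1 : ∀ x, ‖ξ x‖ = 1) (hη1 : ∀ p (a : A φ p), ‖η p a‖ = 1) (x : X) :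
    Summable fun z => G φ S ξ η x z :=
  (summable_dxf x).add (summable_sum_F hη1 x)

lemma tsum_G (hξ1 : ∀ x, ‖ξ x‖ = 1) (hη1 : ∀ p (a : A φ p), ‖η p a‖ = 1) (x : X) :
    ∑' z, G φ S ξ η x z = 1 := by
  calc ∑' z, G φ S ξ η x z
      = (∑' z : X, if z = x then tx φ S ξ x else 0) + ∑' z, ∑' p, F φ S ξ η x p z :=
        Summable.tsum_add (summable_dxf x) (summable_sum_F hη1 x)
    _ = tx φ S ξ x + ∑' p : {p : Σ i, Y i | good φ S x p}, (ξ x ↑p)^2 := by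
        rw [tsum_ite_eq, tsum_tsum_F hη1]
    _ = 1 := by rw [tx]; ring

lemma memℓp_βf (hξ1 : ∀ x, ‖ξ x‖ = 1) (hη1 : ∀ p (a : A φ p), ‖η p a‖ = 1) (x : X) :
    Memℓp (fun z => βf φ S ξ η x z) 2 := by
  apply memℓp_gen
  have : ∀ z : X, ‖βf φ S ξ η x z‖ ^ (2:ℝ≥0∞).toReal = G φ S ξ η x z := by
    intro z
    rw [ENNReal.toReal_ofNat, Real.rpow_two, Real.norm_eq_abs, sq_abs, βf,
      Real.sq_sqrt (G_nonneg hξ1 x z)]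
  exact (summable_G hξ1 hη1 x).congr fun z => (this z).symm

end SEAux
end construction

section contraction

attribute [local instance] Classical.propDecidable
set_option maxHeartbeats 1000000

namespace SEAux

variable {X : Type} [MetricSpace X] {n : ℕ} {Y : Fin n → Type}
variable {φ : ∀ i, X → Y i} {S : ℝ}
  {ξ : X → lp (fun _ : (Σ i, Y i) => ℝ) 2}
  {η : ∀ p : Σ i, Y i, A φ p → lp (fun _ : A φ p => ℝ) 2}

lemma tsum_u_sub_sq (x y : X) (p : Σ i, Y i) (hx : good φ S x p) (hy : good φ S y p) :
    ∑' z, (u φ S η x p z - u φ S η y p z)^2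
      = ‖η p (rep φ S x p hx) - η p (rep φ S y p hy)‖^2 := by
  have hsupp : ∀ z ∉ A φ p, (u φ S η x p z - u φ S η y p z)^2 = 0 := by
    intro z hz
    rw [u_zero_off hz, u_zero_off hz]; ring
  rw [← tsum_subtype_of_support hsupp, lp2_norm_sq]
  refine tsum_congr fun w => ?_
  rw [u_coe, u_coe, v_eq hx, v_eq hy, lp.coeFn_sub, Pi.sub_apply]

lemma Dp_good_good (hη1 : ∀ p (a : A φ p), ‖η p a‖ = 1)
    {R ε₂ : ℝ}
    (hη2 : ∀ p (a b : A φ p), dist (a : X) (b : X) ≤ 2*S + R → ‖η p a - η p b‖ ≤ ε₂)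
    {x y : X} (hxy : dist x y ≤ R) {p : Σ i, Y i}
    (hx : good φ S x p) (hy : good φ S y p) :
    ∑' z, |F φ S ξ η x p z - F φ S ξ η y p z|
      ≤ (ξ x p)^2 * (2*ε₂) + |(ξ x p)^2 - (ξ y p)^2| := by
  set a := rep φ S x p hx with ha
  set b := rep φ S y p hy with hb
  set u1 := u φ S η x p with hu1def
  set u2 := u φ S η y p with hu2def
  have hu1 : Summable fun z => u1 z^2 := summable_u_sq x p
  have hu2 : Summable fun z => u2 z^2 := summable_u_sq y p
  have habs : Summable fun z => |u1 z^2 - u2 z^2| := summable_abs_sq_sub_sq hu1 hu2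
  have hpoint : ∀ z, |F φ S ξ η x p z - F φ S ξ η y p z|
      ≤ (ξ x p)^2 * |u1 z^2 - u2 z^2| + |(ξ x p)^2 - (ξ y p)^2| * u2 z^2 := by
    intro z
    have heq : F φ S ξ η x p z - F φ S ξ η y p z
        = (ξ x p)^2 * (u1 z^2 - u2 z^2) + ((ξ x p)^2 - (ξ y p)^2) * u2 z^2 := by
      rw [F, F]; ring
    rw [heq]
    refine (abs_add_le _ _).trans ?_
    rw [abs_mul, abs_mul, abs_of_nonneg (sq_nonneg ((ξ x) p)),
      abs_of_nonneg (sq_nonneg (u2 z))]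
  have hRHSsum : Summable fun z => (ξ x p)^2 * |u1 z^2 - u2 z^2|
      + |(ξ x p)^2 - (ξ y p)^2| * u2 z^2 :=
    (habs.mul_left _).add (hu2.mul_left _)
  have hLHSsum : Summable fun z => |F φ S ξ η x p z - F φ S ξ η y p z| :=
    Summable.of_nonneg_of_le (fun z => abs_nonneg _) hpoint hRHSsum
  have hsum2 : ∑' z, u2 z^2 = 1 := by rw [hu2def, tsum_u_sq hη1, if_pos hy]
  have hsum1 : ∑' z, u1 z^2 = 1 := by rw [hu1def, tsum_u_sq hη1, if_pos hx]
  have hdiff : ∑' z, |u1 z^2 - u2 z^2| ≤ 2*ε₂ := by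
    have h1 := tsum_abs_sq_sub_sq_le hu1 hu2 (le_of_eq hsum1) (le_of_eq hsum2)
    have h2 : ∑' z, (u1 z - u2 z)^2 = ‖η p a - η p b‖^2 := tsum_u_sub_sq x y p hx hy
    have h3 : ‖η p a - η p b‖ ≤ ε₂ := by
      apply hη2
      have d1 : dist (a : X) x < S := by rw [dist_comm]; exact dist_rep φ S x p hx
      have d2 : dist y (b : X) < S := dist_rep φ S y p hy
      calc dist (a : X) (b : X) ≤ dist (a : X) x + dist x y + dist y (b : X) :=
            dist_triangle4 _ _ _ _
        _ ≤ 2*S + R := by linarith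
    calc ∑' z, |u1 z^2 - u2 z^2| ≤ 2 * Real.sqrt (∑' z, (u1 z - u2 z)^2) := h1
      _ = 2 * ‖η p a - η p b‖ := by rw [h2, Real.sqrt_sq (norm_nonneg _)]
      _ ≤ 2 * ε₂ := by linarith
  calc ∑' z, |F φ S ξ η x p z - F φ S ξ η y p z|
      ≤ ∑' z, ((ξ x p)^2 * |u1 z^2 - u2 z^2| + |(ξ x p)^2 - (ξ y p)^2| * u2 z^2) :=
        Summable.tsum_le_tsum hpoint hLHSsum hRHSsum
    _ = (ξ x p)^2 * ∑' z, |u1 z^2 - u2 z^2|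
        + |(ξ x p)^2 - (ξ y p)^2| * ∑' z, u2 z^2 := by
        rw [Summable.tsum_add (habs.mul_left _) (hu2.mul_left _), tsum_mul_left, tsum_mul_left]
    _ ≤ (ξ x p)^2 * (2*ε₂) + |(ξ x p)^2 - (ξ y p)^2| := by
        rw [hsum2, mul_one]
        have := mul_le_mul_of_nonneg_left hdiff (sq_nonneg ((ξ x) p))
        linarith
  
lemma Dp_good_bad (hη1 : ∀ p (a : A φ p), ‖η p a‖ = 1)
    {x y : X} {p : Σ i, Y i} (hx : good φ S x p) (hy : ¬ good φ S y p) :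
    ∑' z, |F φ S ξ η x p z - F φ S ξ η y p z| = (ξ x p)^2 := by
  have hzero : ∀ z, F φ S ξ η y p z = 0 := by
    intro z; rw [F, u_sq_zero_of_not_good hy, mul_zero]
  have : ∀ z, |F φ S ξ η x p z - F φ S ξ η y p z| = F φ S ξ η x p z := by
    intro z; rw [hzero, sub_zero, abs_of_nonneg (F_nonneg x p z)]
  rw [tsum_congr this, tsum_F_p hη1, if_pos hx, mul_one]

lemma contraction (hξ1 : ∀ x, ‖ξ x‖ = 1) (hη1 : ∀ p (a : A φ p), ‖η p a‖ = 1)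
    {R ε₁ ε₂ δ₀ : ℝ} (hε₂ : 0 ≤ ε₂)
    (hη2 : ∀ p (a b : A φ p), dist (a : X) (b : X) ≤ 2*S + R → ‖η p a - η p b‖ ≤ ε₂)
    (hξdec : ∀ x : X, (∑' p : {p : Σ i, Y i | ¬ good φ S x p}, (ξ x ↑p)^2) ≤ δ₀)
    {x y : X} (hxy : dist x y ≤ R) (hΔ : ‖ξ x - ξ y‖ ≤ ε₁) (hε₁ : 0 ≤ ε₁) :
    ∑' z, (βf φ S ξ η x z - βf φ S ξ η y z)^2 ≤ 6*δ₀ + 2*ε₂ + 2*ε₁ + 4*ε₁^2 := by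
  have hδ₀ : 0 ≤ δ₀ := le_trans (tsum_nonneg (fun p => sq_nonneg _)) (hξdec x)
  have hcoe : ∀ q, (ξ x - ξ y) q = ξ x q - ξ y q := by
    intro q; rw [lp.coeFn_sub, Pi.sub_apply]
  have hΔsum : Summable fun q => (ξ x q - ξ y q)^2 :=
    summable_sq_sub (lp2_summable_sq (ξ x)) (lp2_summable_sq (ξ y))
  have hΔ2 : ∑' q, (ξ x q - ξ y q)^2 ≤ ε₁^2 := by
    have h1 : ∑' q, (ξ x q - ξ y q)^2 = ‖ξ x - ξ y‖^2 := by
      rw [lp2_norm_sq]; exact tsum_congr fun q => by rw [hcoe]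
    rw [h1]
    have := norm_nonneg (ξ x - ξ y)
    nlinarith
  -- product summability of |ΔF|
  have habs_prod : Summable fun q : (Σ i, Y i) × X =>
      |F φ S ξ η x q.1 q.2 - F φ S ξ η y q.1 q.2| := by
    apply Summable.of_nonneg_of_le (fun q => abs_nonneg _) (fun q => ?_)
      ((summable_F_prod (S := S) (ξ := ξ) hη1 x).add (summable_F_prod (S := S) (ξ := ξ) hη1 y))
    exact (abs_sub _ _).trans (by
      rw [abs_of_nonneg (F_nonneg x q.1 q.2), abs_of_nonneg (F_nonneg y q.1 q.2)])
  have habs_z : ∀ z, Summable fun p => |F φ S ξ η x p z - F φ S ξ η y p z| := by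
    intro z
    apply Summable.of_nonneg_of_le (fun p => abs_nonneg _) (fun p => ?_)
      ((summable_F_z (S := S) (ξ := ξ) hη1 x z).add (summable_F_z (S := S) (ξ := ξ) hη1 y z))
    exact (abs_sub _ _).trans (by
      rw [abs_of_nonneg (F_nonneg x p z), abs_of_nonneg (F_nonneg y p z)])
  have habs_marg : Summable fun z => ∑' p, |F φ S ξ η x p z - F φ S ξ η y p z| := by
    have h := habs_prod.prod_symm
    exact ((summable_prod_of_nonneg (fun q => abs_nonneg _)).1 h).2
  have hDsum : Summable fun p => ∑' z, |F φ S ξ η x p z - F φ S ξ η y p z| :=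
    ((summable_prod_of_nonneg (fun q => abs_nonneg _)).1 habs_prod).2
  -- pointwise bound on |G x z - G y z|
  have hGpoint : ∀ z, |G φ S ξ η x z - G φ S ξ η y z|
      ≤ (if z = x then tx φ S ξ x else 0) + (if z = y then tx φ S ξ y else 0)
        + ∑' p, |F φ S ξ η x p z - F φ S ξ η y p z| := by
    intro z
    have hsub : (∑' p, F φ S ξ η x p z) - (∑' p, F φ S ξ η y p z)
        = ∑' p, (F φ S ξ η x p z - F φ S ξ η y p z) :=
      (Summable.tsum_sub (summable_F_z (S := S) (ξ := ξ) hη1 x z)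
        (summable_F_z (S := S) (ξ := ξ) hη1 y z)).symm
    have h1 : |(∑' p, F φ S ξ η x p z) - (∑' p, F φ S ξ η y p z)|
        ≤ ∑' p, |F φ S ξ η x p z - F φ S ξ η y p z| := by
      rw [hsub]
      have := norm_tsum_le_tsum_norm (f := fun p => F φ S ξ η x p z - F φ S ξ η y p z)
        (by simpa [Real.norm_eq_abs] using habs_z z)
      simpa [Real.norm_eq_abs] using this
    have h2 : |(if z = x then tx φ S ξ x else 0) - (if z = y then tx φ S ξ y else 0)|
        ≤ (if z = x then tx φ S ξ x else 0) + (if z = y then tx φ S ξ y else 0) := by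
      have hx0 : 0 ≤ (if z = x then tx φ S ξ x else 0) := by
        by_cases h : z = x <;> simp [h, tx_nonneg hξ1]
      have hy0 : 0 ≤ (if z = y then tx φ S ξ y else 0) := by
        by_cases h : z = y <;> simp [h, tx_nonneg hξ1]
      rw [abs_sub_le_iff]; constructor <;> linarith
    calc |G φ S ξ η x z - G φ S ξ η y z|
        = |((if z = x then tx φ S ξ x else 0) - (if z = y then tx φ S ξ y else 0))
            + ((∑' p, F φ S ξ η x p z) - (∑' p, F φ S ξ η y p z))| := by
          rw [G, G]; ring_nf
      _ ≤ |(if z = x then tx φ S ξ x else 0) - (if z = y then tx φ S ξ y else 0)|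
            + |(∑' p, F φ S ξ η x p z) - (∑' p, F φ S ξ η y p z)| := abs_add_le _ _
      _ ≤ _ := by linarith
  have hRHSsum : Summable fun z => (if z = x then tx φ S ξ x else 0)
      + (if z = y then tx φ S ξ y else 0)
      + ∑' p, |F φ S ξ η x p z - F φ S ξ η y p z| :=
    ((summable_dxf x).add (summable_dxf y)).add habs_marg
  -- step 1 : from βf to |G - G|
  have step1 : ∑' z, (βf φ S ξ η x z - βf φ S ξ η y z)^2
      ≤ ∑' z, |G φ S ξ η x z - G φ S ξ η y z| := by
    have hpt : ∀ z, (βf φ S ξ η x z - βf φ S ξ η y z)^2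
        ≤ |G φ S ξ η x z - G φ S ξ η y z| := fun z =>
      sq_sqrt_sub_sqrt_le (G_nonneg hξ1 x z) (G_nonneg hξ1 y z)
    have habsG : Summable fun z => |G φ S ξ η x z - G φ S ξ η y z| :=
      Summable.of_nonneg_of_le (fun z => abs_nonneg _) (fun z => (hGpoint z)) hRHSsum
    exact Summable.tsum_le_tsum hpt
      (Summable.of_nonneg_of_le (fun z => sq_nonneg _) hpt habsG) habsG
  -- step 2 : sum the pointwise bound
  have habsG : Summable fun z => |G φ S ξ η x z - G φ S ξ η y z| :=
    Summable.of_nonneg_of_le (fun z => abs_nonneg _) (fun z => (hGpoint z)) hRHSsum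
  have step2 : ∑' z, |G φ S ξ η x z - G φ S ξ η y z|
      ≤ tx φ S ξ x + tx φ S ξ y
        + ∑' p, ∑' z, |F φ S ξ η x p z - F φ S ξ η y p z| := by
    have hswap : ∑' z, ∑' p, |F φ S ξ η x p z - F φ S ξ η y p z|
        = ∑' p, ∑' z, |F φ S ξ η x p z - F φ S ξ η y p z| :=
      Summable.tsum_comm (f := fun p z => |F φ S ξ η x p z - F φ S ξ η y p z|) habs_prod
    calc ∑' z, |G φ S ξ η x z - G φ S ξ η y z|
        ≤ ∑' z, ((if z = x then tx φ S ξ x else 0) + (if z = y then tx φ S ξ y else 0)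
            + ∑' p, |F φ S ξ η x p z - F φ S ξ η y p z|) :=
          Summable.tsum_le_tsum hGpoint habsG hRHSsum
      _ = tx φ S ξ x + tx φ S ξ y
            + ∑' z, ∑' p, |F φ S ξ η x p z - F φ S ξ η y p z| := by
          rw [Summable.tsum_add ((summable_dxf x).add (summable_dxf y)) habs_marg,
            Summable.tsum_add (summable_dxf x) (summable_dxf y), tsum_ite_eq, tsum_ite_eq]
      _ = _ := by rw [hswap]
  -- step 3 : bound the per-p sums by M p
  set M : (Σ i, Y i) → ℝ := fun p => 2*ε₂*(ξ x p)^2 + |(ξ x p)^2 - (ξ y p)^2|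
    + (if good φ S y p then 0 else 2*(ξ x p - ξ y p)^2 + 2*(ξ y p)^2)
    + (if good φ S x p then 0 else 2*(ξ x p - ξ y p)^2 + 2*(ξ x p)^2) with hM
  have hm3sum : Summable fun p =>
      (if good φ S y p then 0 else 2*(ξ x p - ξ y p)^2 + 2*(ξ y p)^2) := by
    apply Summable.of_nonneg_of_le (fun p => ?_) (fun p => ?_)
      ((hΔsum.mul_left 2).add ((lp2_summable_sq (ξ y)).mul_left 2))
    · by_cases h : good φ S y p <;> simp [h] <;> positivity
    · by_cases h : good φ S y p <;> simp [h] <;> positivity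
  have hm4sum : Summable fun p =>
      (if good φ S x p then 0 else 2*(ξ x p - ξ y p)^2 + 2*(ξ x p)^2) := by
    apply Summable.of_nonneg_of_le (fun p => ?_) (fun p => ?_)
      ((hΔsum.mul_left 2).add ((lp2_summable_sq (ξ x)).mul_left 2))
    · by_cases h : good φ S x p <;> simp [h] <;> positivity
    · by_cases h : good φ S x p <;> simp [h] <;> positivity
  have hm2sum : Summable fun p => |(ξ x p)^2 - (ξ y p)^2| :=
    summable_abs_sq_sub_sq (lp2_summable_sq (ξ x)) (lp2_summable_sq (ξ y))
  have hMsum : Summable M :=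
    ((((lp2_summable_sq (ξ x)).mul_left (2*ε₂)).add hm2sum).add hm3sum).add hm4sum
  have hDleM : ∀ p, ∑' z, |F φ S ξ η x p z - F φ S ξ η y p z| ≤ M p := by
    intro p
    have hm30 : 0 ≤ (if good φ S y p then 0 else 2*(ξ x p - ξ y p)^2 + 2*(ξ y p)^2) := by
      by_cases h : good φ S y p <;> simp [h] <;> positivity
    have hm40 : 0 ≤ (if good φ S x p then 0 else 2*(ξ x p - ξ y p)^2 + 2*(ξ x p)^2) := by
      by_cases h : good φ S x p <;> simp [h] <;> positivity
    by_cases hx : good φ S x p <;> by_cases hy : good φ S y p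
    · have h := Dp_good_good (ξ := ξ) hη1 hη2 hxy hx hy
      simp only [hM]
      have : (ξ x p)^2 * (2*ε₂) = 2*ε₂*(ξ x p)^2 := by ring
      linarith [this ▸ h]
    · have h := Dp_good_bad (ξ := ξ) hη1 hx hy
      simp only [hM]
      rw [if_neg hy, if_pos hx]
      have habs0 : 0 ≤ |(ξ x p)^2 - (ξ y p)^2| := abs_nonneg _
      have hb : (ξ x p)^2 ≤ 2*(ξ x p - ξ y p)^2 + 2*(ξ y p)^2 := by
        nlinarith [sq_nonneg (ξ x p - 2*(ξ y p))]
      have hsq : 0 ≤ 2*ε₂*(ξ x p)^2 := by positivity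
      linarith [h]
    · have h := Dp_good_bad (ξ := ξ) hη1 hy hx
      have h' : ∑' z, |F φ S ξ η x p z - F φ S ξ η y p z| = (ξ y p)^2 := by
        rw [← h]; exact tsum_congr fun z => abs_sub_comm _ _
      simp only [hM]
      rw [if_pos hy, if_neg hx]
      have habs0 : 0 ≤ |(ξ x p)^2 - (ξ y p)^2| := abs_nonneg _
      have hb : (ξ y p)^2 ≤ 2*(ξ x p - ξ y p)^2 + 2*(ξ x p)^2 := by
        nlinarith [sq_nonneg (2*(ξ x p) - ξ y p)]
      have hsq : 0 ≤ 2*ε₂*(ξ x p)^2 := by positivity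
      linarith [h']
    · have h0 : ∀ z, |F φ S ξ η x p z - F φ S ξ η y p z| = 0 := by
        intro z
        rw [F, F, u_sq_zero_of_not_good hx, u_sq_zero_of_not_good hy]
        simp
      rw [tsum_congr h0, tsum_zero]
      simp only [hM]
      have habs0 : 0 ≤ |(ξ x p)^2 - (ξ y p)^2| := abs_nonneg _
      have hsq : 0 ≤ 2*ε₂*(ξ x p)^2 := by positivity
      linarith
  -- step 4 : sum M
  have htail_y : ∑' p, (if good φ S y p then 0 else (ξ y p)^2) ≤ δ₀ := by
    rw [← tsum_subtype_of_support (s := {p : Σ i, Y i | ¬ good φ S y p})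
      (f := fun p => if good φ S y p then 0 else (ξ y p)^2)
      (fun p hp => if_pos (not_not.mp hp))]
    calc ∑' p : {p : Σ i, Y i | ¬ good φ S y p},
          (if good φ S y ↑p then 0 else (ξ y ↑p)^2)
        = ∑' p : {p : Σ i, Y i | ¬ good φ S y p}, (ξ y ↑p)^2 :=
          tsum_congr fun w => if_neg w.2
      _ ≤ δ₀ := hξdec y
  have htail_x : ∑' p, (if good φ S x p then 0 else (ξ x p)^2) ≤ δ₀ := by
    rw [← tsum_subtype_of_support (s := {p : Σ i, Y i | ¬ good φ S x p})
      (f := fun p => if good φ S x p then 0 else (ξ x p)^2)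
      (fun p hp => if_pos (not_not.mp hp))]
    calc ∑' p : {p : Σ i, Y i | ¬ good φ S x p},
          (if good φ S x ↑p then 0 else (ξ x ↑p)^2)
        = ∑' p : {p : Σ i, Y i | ¬ good φ S x p}, (ξ x ↑p)^2 :=
          tsum_congr fun w => if_neg w.2
      _ ≤ δ₀ := hξdec x
  have hm3ite : Summable fun p => (if good φ S y p then 0 else (ξ y p)^2) := by
    apply Summable.of_nonneg_of_le (fun p => ?_) (fun p => ?_) (lp2_summable_sq (ξ y))
    · by_cases h : good φ S y p <;> simp [h] <;> positivity
    · by_cases h : good φ S y p <;> simp [h] <;> positivity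
  have hm4ite : Summable fun p => (if good φ S x p then 0 else (ξ x p)^2) := by
    apply Summable.of_nonneg_of_le (fun p => ?_) (fun p => ?_) (lp2_summable_sq (ξ x))
    · by_cases h : good φ S x p <;> simp [h] <;> positivity
    · by_cases h : good φ S x p <;> simp [h] <;> positivity
  have hMtotal : ∑' p, M p ≤ 2*ε₂ + 2*ε₁ + (2*ε₁^2 + 2*δ₀) + (2*ε₁^2 + 2*δ₀) := by
    simp only [hM]
    rw [Summable.tsum_add ((((lp2_summable_sq (ξ x)).mul_left (2*ε₂)).add hm2sum).add hm3sum) hm4sum,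
      Summable.tsum_add (((lp2_summable_sq (ξ x)).mul_left (2*ε₂)).add hm2sum) hm3sum,
      Summable.tsum_add ((lp2_summable_sq (ξ x)).mul_left (2*ε₂)) hm2sum]
    have e1 : ∑' p, 2*ε₂*(ξ x p)^2 = 2*ε₂ := by
      rw [tsum_mul_left, ← lp2_norm_sq, hξ1]; norm_num
    have e2 : ∑' p, |(ξ x p)^2 - (ξ y p)^2| ≤ 2*ε₁ := by
      have h1 : ∑' p, (ξ x p)^2 ≤ 1 := by rw [← lp2_norm_sq, hξ1]; norm_num
      have h2 : ∑' p, (ξ y p)^2 ≤ 1 := by rw [← lp2_norm_sq, hξ1]; norm_num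
      have h := tsum_abs_sq_sub_sq_le (lp2_summable_sq (ξ x)) (lp2_summable_sq (ξ y)) h1 h2
      have h3 : Real.sqrt (∑' p, (ξ x p - ξ y p)^2) ≤ ε₁ := by
        rw [show (ε₁ : ℝ) = Real.sqrt (ε₁^2) by rw [Real.sqrt_sq hε₁]]
        exact Real.sqrt_le_sqrt hΔ2
      linarith
    have e3 : ∑' p, (if good φ S y p then 0 else 2*(ξ x p - ξ y p)^2 + 2*(ξ y p)^2)
        ≤ 2*ε₁^2 + 2*δ₀ := by
      have hb : ∀ p, (if good φ S y p then 0 else 2*(ξ x p - ξ y p)^2 + 2*(ξ y p)^2)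
          ≤ 2*(ξ x p - ξ y p)^2 + 2*(if good φ S y p then 0 else (ξ y p)^2) := by
        intro p; by_cases h : good φ S y p <;> simp [h] <;> positivity
      calc ∑' p, (if good φ S y p then 0 else 2*(ξ x p - ξ y p)^2 + 2*(ξ y p)^2)
          ≤ ∑' p, (2*(ξ x p - ξ y p)^2 + 2*(if good φ S y p then 0 else (ξ y p)^2)) :=
            Summable.tsum_le_tsum hb hm3sum ((hΔsum.mul_left 2).add (hm3ite.mul_left 2))
        _ = 2*(∑' p, (ξ x p - ξ y p)^2)
            + 2*(∑' p, (if good φ S y p then 0 else (ξ y p)^2)) := by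
            rw [Summable.tsum_add (hΔsum.mul_left 2) (hm3ite.mul_left 2), tsum_mul_left, tsum_mul_left]
        _ ≤ 2*ε₁^2 + 2*δ₀ := by
            have := htail_y
            nlinarith [hΔ2]
    have e4 : ∑' p, (if good φ S x p then 0 else 2*(ξ x p - ξ y p)^2 + 2*(ξ x p)^2)
        ≤ 2*ε₁^2 + 2*δ₀ := by
      have hb : ∀ p, (if good φ S x p then 0 else 2*(ξ x p - ξ y p)^2 + 2*(ξ x p)^2)
          ≤ 2*(ξ x p - ξ y p)^2 + 2*(if good φ S x p then 0 else (ξ x p)^2) := by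
        intro p; by_cases h : good φ S x p <;> simp [h] <;> positivity
      calc ∑' p, (if good φ S x p then 0 else 2*(ξ x p - ξ y p)^2 + 2*(ξ x p)^2)
          ≤ ∑' p, (2*(ξ x p - ξ y p)^2 + 2*(if good φ S x p then 0 else (ξ x p)^2)) :=
            Summable.tsum_le_tsum hb hm4sum ((hΔsum.mul_left 2).add (hm4ite.mul_left 2))
        _ = 2*(∑' p, (ξ x p - ξ y p)^2)
            + 2*(∑' p, (if good φ S x p then 0 else (ξ x p)^2)) := by
            rw [Summable.tsum_add (hΔsum.mul_left 2) (hm4ite.mul_left 2), tsum_mul_left, tsum_mul_left]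
        _ ≤ 2*ε₁^2 + 2*δ₀ := by
            have := htail_x
            nlinarith [hΔ2]
    linarith
  -- put everything together
  have htx : tx φ S ξ x ≤ δ₀ := by rw [tx_eq_tail hξ1]; exact hξdec x
  have hty : tx φ S ξ y ≤ δ₀ := by rw [tx_eq_tail hξ1]; exact hξdec y
  have hDM : ∑' p, ∑' z, |F φ S ξ η x p z - F φ S ξ η y p z| ≤ ∑' p, M p :=
    Summable.tsum_le_tsum hDleM hDsum hMsum
  calc ∑' z, (βf φ S ξ η x z - βf φ S ξ η y z)^2
      ≤ ∑' z, |G φ S ξ η x z - G φ S ξ η y z| := step1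
    _ ≤ tx φ S ξ x + tx φ S ξ y
        + ∑' p, ∑' z, |F φ S ξ η x p z - F φ S ξ η y p z| := step2
    _ ≤ 6*δ₀ + 2*ε₂ + 2*ε₁ + 4*ε₁^2 := by linarith

end SEAux
end contraction

section decay

attribute [local instance] Classical.propDecidable
set_option maxHeartbeats 1000000

namespace SEAux

variable {X : Type} [MetricSpace X] {n : ℕ} {Y : Fin n → Type}
variable {φ : ∀ i, X → Y i} {S : ℝ}
  {ξ : X → lp (fun _ : (Σ i, Y i) => ℝ) 2}
  {η : ∀ p : Σ i, Y i, A φ p → lp (fun _ : A φ p => ℝ) 2}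

lemma decay (hξ1 : ∀ x, ‖ξ x‖ = 1) (hη1 : ∀ p (a : A φ p), ‖η p a‖ = 1)
    {S' δ : ℝ} (hδ : 0 ≤ δ) (hS : 0 < S) (hS' : 0 ≤ S')
    (hηdec : ∀ p (a : A φ p),
      (∑' w : {w : A φ p | S' < dist (a : X) (w : X)}, ((η p a) ↑w)^2) ≤ δ)
    (x : X) :
    ∑' w : {w : X | S + S' < dist x w}, G φ S ξ η x ↑w ≤ δ := by
  set T : Set X := {w : X | S + S' < dist x w} with hT
  -- on T the delta term vanishes
  have hGT : ∀ w : T, G φ S ξ η x ↑w = ∑' p, F φ S ξ η x p ↑w := by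
    intro w
    have hne : (w : X) ≠ x := by
      intro h
      have h2 : S + S' < dist x (w : X) := w.2
      rw [h, dist_self] at h2
      linarith
    rw [G, if_neg hne, zero_add]
  -- the indicator version
  obtain ⟨J, hJ⟩ : ∃ J : (Σ i, Y i) → X → ℝ,
      ∀ p z, J p z = if z ∈ T then F φ S ξ η x p z else 0 := ⟨_, fun p z => rfl⟩
  have hJnonneg : ∀ p z, 0 ≤ J p z := by
    intro p z
    rw [hJ]
    by_cases h : z ∈ T
    · rw [if_pos h]; exact F_nonneg x p z
    · rw [if_neg h]
  have hJle : ∀ p z, J p z ≤ F φ S ξ η x p z := by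
    intro p z
    rw [hJ]
    by_cases h : z ∈ T
    · rw [if_pos h]
    · rw [if_neg h]; exact F_nonneg x p z
  have hJprod : Summable fun q : (Σ i, Y i) × X => J q.1 q.2 :=
    Summable.of_nonneg_of_le (fun q => hJnonneg q.1 q.2) (fun q => hJle q.1 q.2)
      (summable_F_prod (S := S) (ξ := ξ) hη1 x)
  have hJz : ∀ z, Summable fun p => J p z := fun z =>
    Summable.of_nonneg_of_le (fun p => hJnonneg p z) (fun p => hJle p z)
      (summable_F_z (S := S) (ξ := ξ) hη1 x z)
  have hJp : ∀ p, Summable fun z => J p z := fun p =>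
    Summable.of_nonneg_of_le (fun z => hJnonneg p z) (fun z => hJle p z)
      (summable_F_p x p)
  -- rewrite the subtype sum as a full sum of indicators
  have hstep1 : ∑' w : T, G φ S ξ η x ↑w = ∑' z, ∑' p, J p z := by
    rw [tsum_congr hGT, tsum_subtype T (fun z => ∑' p, F φ S ξ η x p z)]
    refine tsum_congr fun z => ?_
    by_cases h : z ∈ T
    · rw [Set.indicator_of_mem h]
      exact tsum_congr fun p => by rw [hJ, if_pos h]
    · rw [Set.indicator_of_notMem h]
      rw [tsum_congr (fun p => show J p z = 0 by rw [hJ, if_neg h]), tsum_zero]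
  have hswap : ∑' z, ∑' p, J p z = ∑' p, ∑' z, J p z :=
    Summable.tsum_comm (f := fun p z => J p z) hJprod
  -- per p bound
  have hperp : ∀ p, ∑' z, J p z ≤ (ξ x p)^2 * δ := by
    intro p
    by_cases hg : good φ S x p
    · set a := rep φ S x p hg with ha
      obtain ⟨K, hK⟩ : ∃ K : X → ℝ,
          ∀ z, K z = if z ∈ T then (u φ S η x p z)^2 else 0 := ⟨_, fun z => rfl⟩
      have hKfact : ∀ z, J p z = (ξ x p)^2 * K z := by
        intro z
        rw [hJ, hK]
        by_cases h : z ∈ T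
        · rw [if_pos h, if_pos h, F]
        · rw [if_neg h, if_neg h, mul_zero]
      have hKsum : Summable K := by
        apply Summable.of_nonneg_of_le (fun z => ?_) (fun z => ?_) (summable_u_sq (φ := φ) (S := S) (η := η) x p)
        · rw [hK]; by_cases h : z ∈ T
          · rw [if_pos h]; positivity
          · rw [if_neg h]
        · rw [hK]; by_cases h : z ∈ T
          · rw [if_pos h]
          · rw [if_neg h]; positivity
      have hKsupp : ∀ z ∉ A φ p, K z = 0 := by
        intro z hz
        rw [hK]
        by_cases h : z ∈ T
        · rw [if_pos h, u_sq_zero_off z hz]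
        · rw [if_neg h]
      have hKbound : ∑' z, K z ≤ δ := by
        rw [← tsum_subtype_of_support hKsupp]
        -- ∑' w : A φ p, K ↑w  ≤ δ
        have hptw : ∀ w : A φ p, K ↑w
            ≤ (if S' < dist (a : X) (w : X) then ((η p a) w)^2 else 0) := by
          intro w
          rw [hK]
          by_cases h : (w : X) ∈ T
          · rw [if_pos h]
            have hdx : dist x (a : X) < S := dist_rep φ S x p hg
            have hwT : S + S' < dist x (w : X) := h
            have hfar : S' < dist (a : X) (w : X) := by
              have := dist_triangle x (a : X) (w : X)
              linarith
            rw [if_pos hfar, u_coe, v_eq hg]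
          · rw [if_neg h]
            by_cases h2 : S' < dist (a : X) (w : X)
            · rw [if_pos h2]; positivity
            · rw [if_neg h2]
        have hsum_ind : Summable fun w : A φ p =>
            (if S' < dist (a : X) (w : X) then ((η p a) w)^2 else 0) := by
          apply Summable.of_nonneg_of_le (fun w => ?_) (fun w => ?_)
            (lp2_summable_sq (η p a))
          · by_cases h : S' < dist (a : X) (w : X)
            · rw [if_pos h]; positivity
            · rw [if_neg h]
          · by_cases h : S' < dist (a : X) (w : X)
            · rw [if_pos h]
            · rw [if_neg h]; positivity
        have hKsub : Summable fun w : A φ p => K ↑w :=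
          (summable_subtype_of_support hKsupp).2 hKsum
        have htail : ∑' w : A φ p,
            (if S' < dist (a : X) (w : X) then ((η p a) w)^2 else 0) ≤ δ := by
          rw [← tsum_subtype_of_support
            (s := {w : A φ p | S' < dist (a : X) (w : X)})
            (f := fun w : A φ p => if S' < dist (a : X) (w : X) then ((η p a) w)^2 else 0)
            (fun w hw => if_neg hw)]
          calc ∑' w : {w : A φ p | S' < dist (a : X) (w : X)},
                (if S' < dist (a : X) ((w : A φ p) : X) then ((η p a) ↑w)^2 else 0)
              = ∑' w : {w : A φ p | S' < dist (a : X) (w : X)}, ((η p a) ↑w)^2 :=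
                tsum_congr fun w => if_pos w.2
            _ ≤ δ := hηdec p a
        exact le_trans (Summable.tsum_le_tsum hptw hKsub hsum_ind) htail
      calc ∑' z, J p z = ∑' z, (ξ x p)^2 * K z := tsum_congr hKfact
        _ = (ξ x p)^2 * ∑' z, K z := tsum_mul_left
        _ ≤ (ξ x p)^2 * δ := mul_le_mul_of_nonneg_left hKbound (sq_nonneg _)
    · have h0 : ∀ z, J p z = 0 := by
        intro z
        rw [hJ]
        by_cases h : z ∈ T
        · rw [if_pos h, F, u_sq_zero_of_not_good hg, mul_zero]
        · rw [if_neg h]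
      rw [tsum_congr h0, tsum_zero]
      positivity
  -- sum up
  have hmarg : Summable fun p => ∑' z, J p z :=
    ((summable_prod_of_nonneg (fun q => hJnonneg q.1 q.2)).1 hJprod).2
  calc ∑' w : T, G φ S ξ η x ↑w = ∑' p, ∑' z, J p z := by rw [hstep1, hswap]
    _ ≤ ∑' p, (ξ x p)^2 * δ :=
        Summable.tsum_le_tsum hperp hmarg ((lp2_summable_sq (ξ x)).mul_right δ)
    _ = (∑' p, (ξ x p)^2) * δ := tsum_mul_right
    _ = δ := by rw [← lp2_norm_sq, hξ1]; norm_num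

end SEAux
end decay

set_option maxHeartbeats 1000000 in
/-- If `{φ i}` is a strongly embeddable family of maps and the preimages form an
equi-strongly embeddable family of metric spaces, then `X` is strongly embeddable. -/
theorem stronglyEmbeddable_of_seFamily (X : Type) [MetricSpace X]
    (hud : UniformlyDiscrete X) (hbg : BoundedGeometry X)
    {n : ℕ} {Y : Fin n → Type} (φ : ∀ i, X → Y i)
    (hse : SEFamily φ)
    (hequi : EquiStronglyEmbeddable (fun p : Σ i, Y i => φ p.1 ⁻¹' {p.2})) :
    StronglyEmbeddable X := by
  classical
  intro R hR ε hε
  set ε₁ := min (ε^2/16) (ε/4) with hε₁def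
  have hε₁pos : 0 < ε₁ := lt_min (by positivity) (by positivity)
  obtain ⟨ξ, hξ1, hξ2, hξ3⟩ := hse R hR ε₁ hε₁pos
  obtain ⟨S₀, hS₀⟩ := hξ3 (ε^2/24) (by positivity)
  set S := max S₀ 1 with hSdef
  have hS1 : (1:ℝ) ≤ S := le_max_right _ _
  have hSpos : 0 < S := by linarith
  have hξdec : ∀ x : X,
      (∑' p : {p : Σ i, Y i | ¬ SEAux.good φ S x p}, (ξ x ↑p)^2) ≤ ε^2/24 := by
    intro x
    have hsubset : {p : Σ i, Y i | ¬ SEAux.good φ S x p}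
        ⊆ {p : Σ i, Y i | ¬ SEAux.good φ S₀ x p} := by
      intro p hp hgood₀
      obtain ⟨z, hz, hφz⟩ := hgood₀
      exact hp ⟨z, lt_of_lt_of_le hz (le_max_left _ _), hφz⟩
    exact le_trans (tsum_subtype_mono (fun p => sq_nonneg _)
      (lp2_summable_sq (ξ x)) hsubset) (hS₀ x)
  have h2SR : (0:ℝ) < 2*S + R := by linarith
  obtain ⟨η, hη1, hη2, hη3⟩ := hequi (2*S+R) h2SR (ε^2/16) (by positivity)
  set β : X → lp (fun _ : X => ℝ) 2 :=
    fun x => ⟨fun z => SEAux.βf φ S ξ η x z, SEAux.memℓp_βf hξ1 hη1 x⟩ with hβ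
  have hβapp : ∀ x z, (β x) z = SEAux.βf φ S ξ η x z := fun x z => rfl
  refine ⟨β, ?_, ?_, ?_⟩
  · intro x
    have h1 : ‖β x‖^2 = 1 := by
      rw [lp2_norm_sq]
      have hz : ∀ z, ((β x) z)^2 = SEAux.G φ S ξ η x z := by
        intro z
        rw [hβapp, SEAux.βf, Real.sq_sqrt (SEAux.G_nonneg hξ1 x z)]
      rw [tsum_congr hz, SEAux.tsum_G hξ1 hη1]
    nlinarith [norm_nonneg (β x)]
  · intro x y hxy
    have hΔ : ‖ξ x - ξ y‖ ≤ ε₁ := hξ2 x y hxy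
    have hc := SEAux.contraction hξ1 hη1 (by positivity) hη2 hξdec hxy hΔ
      (le_of_lt hε₁pos)
    have hnorm : ‖β x - β y‖^2
        = ∑' z, (SEAux.βf φ S ξ η x z - SEAux.βf φ S ξ η y z)^2 := by
      rw [lp2_norm_sq]
      refine tsum_congr fun z => ?_
      rw [lp.coeFn_sub, Pi.sub_apply, hβapp, hβapp]
    have hε₁a : ε₁ ≤ ε^2/16 := min_le_left _ _
    have hε₁b : ε₁ ≤ ε/4 := min_le_right _ _
    have h4 : ε₁^2 ≤ (ε/4)^2 := by nlinarith
    have hsq : ‖β x - β y‖^2 ≤ ε^2 := by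
      rw [hnorm]
      calc ∑' z, (SEAux.βf φ S ξ η x z - SEAux.βf φ S ξ η y z)^2
          ≤ 6*(ε^2/24) + 2*(ε^2/16) + 2*ε₁ + 4*ε₁^2 := hc
        _ ≤ ε^2 := by nlinarith
    nlinarith [norm_nonneg (β x - β y)]
  · intro δ hδ
    obtain ⟨S', hS'⟩ := hη3 δ hδ
    refine ⟨S + max S' 0, fun x => ?_⟩
    have hηdec : ∀ p (a : SEAux.A φ p),
        (∑' w : {w : SEAux.A φ p | max S' 0 < dist (a : X) (w : X)},
          ((η p a) ↑w)^2) ≤ δ := by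
      intro p a
      refine le_trans (tsum_subtype_mono (fun w => sq_nonneg _)
        (lp2_summable_sq (η p a)) (fun w hw => lt_of_le_of_lt (le_max_left S' 0) hw))
        (hS' p a)
    have hdec := SEAux.decay (ξ := ξ) hξ1 hη1 (le_of_lt hδ) hSpos
      (le_max_right S' 0) hηdec x
    refine le_trans (le_of_eq (tsum_congr fun w => ?_)) hdec
    rw [hβapp, SEAux.βf, Real.sq_sqrt (SEAux.G_nonneg hξ1 x ↑w)]

end
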